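/- Let K be an algebraically closed field and σ a K-linear automorphism of 𝒞ₙ whose underlying permutation of the objects is an n-cycle. Then 𝒞ₙ has a multiplicative basis (x_{ij}) with σ(x_{ij}) = x_{σ(i)σ(j)} for all i,j ∈ [n]; in particular, σⁿ is the identity automorphism of 𝒞ₙ. -/

import Mathlib

open CategoryTheory

/-- The category `𝒞ₙ`: objects are `Fin n`, every hom-space is the one-dimensional
`K`-vector space `K`, and composition is multiplication in `K` (so the identity of
every object is `1 : K`). -/
def Cn (K : Type) (n : ℕ) : Type := Fin n

section CnSetup

variable {K : Type} [Field K] {n : ℕ}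

instance : Category (Cn K n) where
  Hom _ _ := K
  id _ := (1 : K)
  comp f g := @HMul.hMul K K K _ f g
  id_comp f := @one_mul K _ f
  comp_id f := @mul_one K _ f
  assoc f g h := @mul_assoc K _ f g h

instance : Preadditive (Cn K n) where
  homGroup _ _ := inferInstanceAs (AddCommGroup K)
  add_comp _ _ _ f f' g := @add_mul K _ _ _ f f' g
  comp_add _ _ _ f g g' := @mul_add K _ _ _ f g g'

instance : CategoryTheory.Linear K (Cn K n) where
  homModule _ _ := inferInstanceAs (Module K K)
  smul_comp _ _ _ r f g := @smul_mul_assoc K K _ _ _ r f g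
  comp_smul _ _ _ f r g := @mul_smul_comm K K _ _ _ r f g

/-- The morphism `X ⟶ Y` of `𝒞ₙ` given by the scalar `r`.  In particular
`CnHom j i 1` is the canonical basic morphism `x_{ij} : j ⟶ i`. -/
def CnHom (X Y : Cn K n) (r : K) : X ⟶ Y := r

/-- The scalar underlying a morphism of `𝒞ₙ`. -/
def toK {X Y : Cn K n} (f : X ⟶ Y) : K := f

end CnSetup

/-- A functor between `K`-linear categories is `K`-linear if it is additive on hom-spaces
and commutes with the action of `K` on hom-spaces. -/
def IsKLinearFunctor (K : Type) [Field K] {C D : Type*} [Category C] [Category D]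
    [Preadditive C] [Preadditive D] [CategoryTheory.Linear K C] [CategoryTheory.Linear K D]
    (F : C ⥤ D) : Prop :=
  (∀ (X Y : C) (f g : X ⟶ Y), F.map (f + g) = F.map f + F.map g) ∧
  (∀ (X Y : C) (r : K) (f : X ⟶ Y), F.map (r • f) = r • F.map f)

/-- Iterated composition power of an endofunctor of `𝒞ₙ`. -/
def funcPow {K : Type} [Field K] {n : ℕ} (F : Cn K n ⥤ Cn K n) : ℕ → (Cn K n ⥤ Cn K n)
  | 0 => 𝟭 (Cn K n)
  | k + 1 => funcPow F k ⋙ F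

lemma cycle_struct {n : ℕ} (hn : 0 < n) (σp : Equiv.Perm (Fin n))
    (hcyc : ∀ i j : Fin n, ∃ k : ℕ, (σp ^ k) i = j) :
    σp ^ n = 1 ∧
    (∀ a b : ℕ, a < n → b < n → (σp ^ a) ⟨0, hn⟩ = (σp ^ b) ⟨0, hn⟩ → a = b) ∧
    (∀ i : Fin n, ∃ k : ℕ, k < n ∧ (σp ^ k) ⟨0, hn⟩ = i) := by
  set z : Fin n := ⟨0, hn⟩ with hz
  have hper : ∃ k : ℕ, 0 < k ∧ (σp ^ k) z = z := by
    refine ⟨orderOf σp, orderOf_pos σp, ?_⟩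
    rw [pow_orderOf_eq_one]; rfl
  obtain ⟨m, hm0, hmz, hmin⟩ :
      ∃ m : ℕ, 0 < m ∧ (σp ^ m) z = z ∧ ∀ k, k < m → ¬(0 < k ∧ (σp ^ k) z = z) :=
    ⟨Nat.find hper, (Nat.find_spec hper).1, (Nat.find_spec hper).2,
      fun k hk => Nat.find_min hper hk⟩
  have hperiod : ∀ k, (σp ^ (k + m)) z = (σp ^ k) z := by
    intro k; rw [pow_add, Equiv.Perm.mul_apply, hmz]
  have hmod : ∀ k, (σp ^ k) z = (σp ^ (k % m)) z := by
    intro k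
    conv_lhs => rw [← Nat.mod_add_div k m]
    generalize k / m = q
    induction q with
    | zero => rfl
    | succ q ih =>
        rw [Nat.mul_succ, ← Nat.add_assoc, hperiod, ih]
  have hinj : ∀ a b : ℕ, a ≤ b → b < m → (σp ^ a) z = (σp ^ b) z → a = b := by
    intro a b hab hbm h
    have h1 : σp ^ (b - a) * σp ^ a = σp ^ b := by
      rw [← pow_add, Nat.sub_add_cancel hab]
    have h2 : (σp ^ (b - a)) ((σp ^ a) z) = (σp ^ a) z := by
      rw [← Equiv.Perm.mul_apply, h1, ← h]
    have h3 : (σp ^ a) ((σp ^ (b - a)) z) = (σp ^ a) z := by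
      rw [← Equiv.Perm.mul_apply, ← pow_mul_comm, Equiv.Perm.mul_apply, h2]
    have h4 : (σp ^ (b - a)) z = z := (σp ^ a).injective h3
    by_contra hne
    have hlt : b - a < m := lt_of_le_of_lt (Nat.sub_le b a) hbm
    exact hmin _ hlt ⟨Nat.sub_pos_of_lt (lt_of_le_of_ne hab hne), h4⟩
  have hinj' : ∀ a b : ℕ, a < m → b < m → (σp ^ a) z = (σp ^ b) z → a = b := by
    intro a b ha hb h
    rcases le_total a b with hab | hab
    · exact hinj a b hab hb h
    · exact (hinj b a hab ha h.symm).symm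
  have hsurj : ∀ i : Fin n, ∃ k : ℕ, k < m ∧ (σp ^ k) z = i := by
    intro i
    obtain ⟨k, hk⟩ := hcyc z i
    exact ⟨k % m, Nat.mod_lt k hm0, by rw [← hmod, hk]⟩
  -- m = n
  have hcard1 : (Finset.range m).card = ((Finset.range m).image (fun k => (σp ^ k) z)).card := by
    rw [Finset.card_image_of_injOn]
    intro a ha b hb h
    exact hinj' a b (Finset.mem_range.mp ha) (Finset.mem_range.mp hb) h
  have hub : ((Finset.range m).image (fun k => (σp ^ k) z)).card ≤ n := by
    simpa using Finset.card_le_univ ((Finset.range m).image (fun k => (σp ^ k) z))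
  have hmn : m ≤ n := by
    rw [← Finset.card_range m, hcard1]; exact hub
  have hnm : n ≤ m := by
    have hsub : Finset.univ ⊆ (Finset.range m).image (fun k => (σp ^ k) z) := by
      intro i _
      obtain ⟨k, hk, hki⟩ := hsurj i
      exact Finset.mem_image.mpr ⟨k, Finset.mem_range.mpr hk, hki⟩
    have := Finset.card_le_card hsub
    simpa [Finset.card_range] using (le_trans this (le_of_eq (hcard1.symm.trans (Finset.card_range m))))
  have hmeq : m = n := le_antisymm hmn hnm
  have hpm : σp ^ m = 1 := by
    apply Equiv.ext
    intro i
    obtain ⟨k, _, hki⟩ := hsurj i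
    rw [← hki, ← Equiv.Perm.mul_apply, pow_mul_comm, Equiv.Perm.mul_apply, hmz,
      Equiv.Perm.one_apply]
  have hpown : σp ^ n = 1 := hmeq ▸ hpm
  refine ⟨hpown, ?_, ?_⟩
  · exact fun a b ha hb h =>
      hinj' a b (lt_of_lt_of_eq ha hmeq.symm) (lt_of_lt_of_eq hb hmeq.symm) h
  · exact fun i => (hsurj i).imp fun k hk => ⟨lt_of_lt_of_eq hk.1 hmeq, hk.2⟩
section Stmt9Aux
variable {K : Type} [Field K] {n : ℕ}

lemma comp_toK {X Y Z : Cn K n} (f : X ⟶ Y) (g : Y ⟶ Z) :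
    f ≫ g = CnHom X Z (toK f * toK g) := rfl

lemma smul_toK {X Y : Cn K n} (r : K) (f : X ⟶ Y) :
    r • f = CnHom X Y (r * toK f) := rfl

lemma toK_CnHom (X Y : Cn K n) (r : K) : toK (CnHom X Y r) = r := rfl

lemma hom_ext {X Y : Cn K n} (f g : X ⟶ Y) (h : toK f = toK g) : f = g := h

lemma eqToHom_toK {X Y : Cn K n} (h : X = Y) : eqToHom h = CnHom X Y 1 := by
  subst h; rfl

lemma id_toK (X : Cn K n) : 𝟙 X = CnHom X X 1 := rfl

/-- A smul-linear endofunctor of `𝒞ₙ` acts on hom-spaces by multiplication by the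
scalar it assigns to the basic morphism. -/
lemma map_toK (F : Cn K n ⥤ Cn K n)
    (hF : ∀ (X Y : Cn K n) (r : K) (f : X ⟶ Y), F.map (r • f) = r • F.map f)
    {X Y : Cn K n} (f : X ⟶ Y) :
    F.map f = CnHom (F.obj X) (F.obj Y) (toK f * toK (F.map (CnHom X Y 1))) := by
  have h1 : f = (toK f) • (CnHom X Y 1) := by
    apply hom_ext
    rw [smul_toK, toK_CnHom, toK_CnHom, mul_one]
  calc F.map f = F.map ((toK f) • (CnHom X Y 1)) := by rw [← h1]
    _ = (toK f) • F.map (CnHom X Y 1) := hF _ _ _ _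
    _ = CnHom (F.obj X) (F.obj Y) (toK f * toK (F.map (CnHom X Y 1))) := smul_toK _ _

lemma sandwich_toK {X Y A B : Cn K n} (p : A = X) (q : Y = B) (g : X ⟶ Y) :
    toK (eqToHom p ≫ g ≫ eqToHom q) = toK g := by
  subst p; subst q
  show (1 : K) * (toK g * 1) = toK g
  ring

end Stmt9Aux
/-- **Lemma (normalization for an `n`-cycle).**  If `K` is algebraically closed and the
underlying object permutation `σp` of the `K`-linear automorphism `σ` of `𝒞ₙ` is an
`n`-cycle (i.e. has a single orbit), then `𝒞ₙ` has a multiplicative basis `x` with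
`σ (x_{ij}) = x_{σ(i) σ(j)}` for all `i, j`; in particular `σⁿ` is the identity
automorphism of `𝒞ₙ`. -/
theorem stmt9 (K : Type) [Field K] [IsAlgClosed K] (n : ℕ)
    (σ : Cn K n ⥤ Cn K n) (hσl : IsKLinearFunctor K σ)
    (hσa : ∃ σ' : Cn K n ⥤ Cn K n, σ ⋙ σ' = 𝟭 (Cn K n) ∧ σ' ⋙ σ = 𝟭 (Cn K n))
    (σp : Equiv.Perm (Fin n)) (hobj : ∀ i : Cn K n, σ.obj i = σp i)
    (hcyc : ∀ i j : Fin n, ∃ k : ℕ, (σp ^ k) i = j) :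
    (∃ x : Cn K n → Cn K n → K, (∀ i j, x i j ≠ 0) ∧
      (∀ i j k, x i j * x j k = x i k) ∧
      (∀ i j : Cn K n,
        σ.map (CnHom j i (x i j)) = CnHom (σ.obj j) (σ.obj i) (x (σp i) (σp j)))) ∧
    funcPow σ n = 𝟭 (Cn K n) := by
  rcases Nat.eq_zero_or_pos n with hn | hn
  · subst hn
    exact ⟨⟨fun _ _ => 1, fun i => Fin.elim0 i, fun i => Fin.elim0 i,
      fun i => Fin.elim0 i⟩, rfl⟩
  obtain ⟨σ', hσ'1, _⟩ := hσa
  -- the scalar of `σ` on the basic morphism `X ⟶ Y`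
  obtain ⟨u, hu⟩ : ∃ u : Cn K n → Cn K n → K,
      ∀ X Y, u X Y = toK (σ.map (CnHom X Y 1)) := ⟨_, fun _ _ => rfl⟩
  have hmapσ : ∀ {X Y : Cn K n} (f : X ⟶ Y),
      σ.map f = CnHom (σ.obj X) (σ.obj Y) (toK f * u X Y) := by
    intro X Y f
    rw [hu]
    exact map_toK σ hσl.2 f
  have humul : ∀ X Y Z : Cn K n, u X Y * u Y Z = u X Z := by
    intro X Y Z
    have h1 : CnHom X Y 1 ≫ CnHom Y Z 1 = CnHom X Z 1 := by
      rw [comp_toK, toK_CnHom, toK_CnHom, mul_one]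
    have h2 := σ.map_comp (CnHom X Y 1) (CnHom Y Z 1)
    rw [h1] at h2
    have h3 := congrArg toK h2
    rw [comp_toK, toK_CnHom] at h3
    rw [hu, hu, hu]
    exact h3.symm
  -- injectivity on homs, hence nonvanishing of u
  have hinjhom : ∀ {X Y : Cn K n} (f g : X ⟶ Y), σ.map f = σ.map g → f = g := by
    intro X Y f g h
    have h1 := Functor.congr_hom hσ'1 f
    have h2 := Functor.congr_hom hσ'1 g
    rw [Functor.comp_map] at h1 h2
    rw [h] at h1
    have h3 := h1.symm.trans h2
    have h4 := congrArg toK h3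
    rw [sandwich_toK, sandwich_toK] at h4
    exact h4
  have hσ0 : ∀ X Y : Cn K n, σ.map (CnHom X Y 0) = CnHom (σ.obj X) (σ.obj Y) 0 := by
    intro X Y
    rw [hmapσ, toK_CnHom, zero_mul]
  have hune : ∀ X Y : Cn K n, u X Y ≠ 0 := by
    intro X Y h
    have h1 : σ.map (CnHom X Y 1) = CnHom (σ.obj X) (σ.obj Y) 0 := by
      rw [hmapσ, toK_CnHom, one_mul, h]
    have h2 : CnHom X Y (1 : K) = CnHom X Y 0 :=
      hinjhom _ _ (h1.trans (hσ0 X Y).symm)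
    exact one_ne_zero (congrArg toK h2)
  -- cycle structure
  obtain ⟨hpow, hinj, hsurj⟩ := cycle_struct hn σp hcyc
  obtain ⟨z, hzdef⟩ : ∃ z : Fin n, z = ⟨0, hn⟩ := ⟨_, rfl⟩
  rw [← hzdef] at hinj hsurj
  choose kIdx hkIdx1 hkIdx2 using hsurj
  have hk0 : kIdx z = 0 := by
    apply hinj _ _ (hkIdx1 z) hn
    rw [hkIdx2, pow_zero, Equiv.Perm.one_apply]
  obtain ⟨b, hb⟩ : ∃ b : Fin n → K, ∀ i, b i = u z i := ⟨_, fun _ => rfl⟩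
  have hbne : ∀ i, b i ≠ 0 := by intro i; rw [hb]; exact hune z i
  have hab : ∀ i j : Fin n, b j * u j i = b i := by
    intro i j; rw [hb, hb]; exact humul z j i
  obtain ⟨c, hc⟩ : ∃ c : K, c = ∏ k ∈ Finset.range n, b ((σp ^ k) z) := ⟨_, rfl⟩
  have hcne : c ≠ 0 := by
    rw [hc]; exact Finset.prod_ne_zero_iff.mpr fun k _ => hbne _
  obtain ⟨lam, hlam⟩ := IsAlgClosed.exists_pow_nat_eq (c⁻¹) hn
  have hlamne : lam ≠ 0 := by
    intro h
    rw [h, zero_pow hn.ne'] at hlam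
    exact inv_ne_zero hcne hlam.symm
  obtain ⟨T, hT⟩ : ∃ T : ℕ → K,
      ∀ k, T k = lam ^ k * ∏ m ∈ Finset.range k, b ((σp ^ m) z) := ⟨_, fun _ => rfl⟩
  have hTne : ∀ k, T k ≠ 0 := by
    intro k; rw [hT]
    exact mul_ne_zero (pow_ne_zero _ hlamne) (Finset.prod_ne_zero_iff.mpr fun m _ => hbne _)
  have hTsucc : ∀ k, T (k + 1) = lam * T k * b ((σp ^ k) z) := by
    intro k
    rw [hT, hT, Finset.prod_range_succ, pow_succ]
    ring
  have hTn : T n = 1 := by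
    rw [hT, ← hc, hlam]
    exact inv_mul_cancel₀ hcne
  obtain ⟨t, ht⟩ : ∃ t : Fin n → K, ∀ i, t i = T (kIdx i) := ⟨_, fun _ => rfl⟩
  have htne : ∀ i, t i ≠ 0 := by intro i; rw [ht]; exact hTne _
  have hkey : ∀ i, t (σp i) = lam * t i * b i := by
    intro i
    rcases lt_or_eq_of_le (Nat.succ_le_of_lt (hkIdx1 i)) with hlt | heq
    · have hks : kIdx (σp i) = kIdx i + 1 := by
        apply hinj _ _ (hkIdx1 _) hlt
        rw [hkIdx2, pow_succ', Equiv.Perm.mul_apply, hkIdx2 i]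
      rw [ht, ht, hks, hTsucc, hkIdx2 i]
    · have heq' : kIdx i + 1 = n := heq
      have h1 : σp i = z := by
        have := hkIdx2 i
        rw [← this, ← Equiv.Perm.mul_apply, ← pow_succ', heq', hpow, Equiv.Perm.one_apply]
      have h2 : t (σp i) = 1 := by
        rw [h1, ht, hk0, hT]
        simp
      have h3 : lam * t i * b i = T (kIdx i + 1) := by
        rw [hTsucc, hkIdx2 i, ht]
      rw [h2, h3, heq', hTn]
  obtain ⟨x, hx⟩ : ∃ x : Cn K n → Cn K n → K,
      ∀ i j, x i j = t i * (t j)⁻¹ := ⟨_, fun _ _ => rfl⟩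
  have hxne : ∀ i j, x i j ≠ 0 := by
    intro i j; rw [hx]
    exact mul_ne_zero (htne i) (inv_ne_zero (htne j))
  have hxmul : ∀ i j k, x i j * x j k = x i k := by
    intro i j k
    rw [hx, hx, hx, mul_assoc, ← mul_assoc (t j)⁻¹, inv_mul_cancel₀ (htne j), one_mul]
  have hue : ∀ i j : Fin n, u j i = b i * (b j)⁻¹ := by
    intro i j
    rw [← hab i j, mul_comm (b j) (u j i), mul_assoc, mul_inv_cancel₀ (hbne j), mul_one]
  have hxe : ∀ i j : Fin n, x i j * u j i = x (σp i) (σp j) := by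
    intro i j
    erw [hue, hx, hx, hkey, hkey]
    field_simp [htne, hbne, hlamne]
  have hmain : ∀ i j : Cn K n,
      σ.map (CnHom j i (x i j)) = CnHom (σ.obj j) (σ.obj i) (x (σp i) (σp j)) := by
    intro i j
    rw [hmapσ, toK_CnHom]
    exact congrArg (CnHom (σ.obj j) (σ.obj i)) (hxe i j)
  refine ⟨⟨x, hxne, hxmul, hmain⟩, ?_⟩
  -- now the power of σ
  have hlinPow : ∀ k : ℕ, ∀ (X Y : Cn K n) (r : K) (f : X ⟶ Y),
      (funcPow σ k).map (r • f) = r • (funcPow σ k).map f := by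
    intro k
    induction k with
    | zero => intro X Y r f; rfl
    | succ k ih =>
        intro X Y r f
        show σ.map ((funcPow σ k).map (r • f)) = r • σ.map ((funcPow σ k).map f)
        rw [ih, hσl.2]
  have hobjPow : ∀ (k : ℕ) (i : Cn K n), (funcPow σ k).obj i = (σp ^ k) i := by
    intro k
    induction k with
    | zero => intro i; rw [pow_zero]; rfl
    | succ k ih =>
        intro i
        show σ.obj ((funcPow σ k).obj i) = (σp ^ (k + 1)) i
        erw [ih, hobj, pow_succ', Equiv.Perm.mul_apply]
  have hmapPow : ∀ (k : ℕ) (i j : Cn K n),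
      toK ((funcPow σ k).map (CnHom j i (x i j))) = x ((σp ^ k) i) ((σp ^ k) j) := by
    intro k
    induction k with
    | zero => intro i j; rw [pow_zero]; rfl
    | succ k ih =>
        intro i j
        show toK (σ.map ((funcPow σ k).map (CnHom j i (x i j)))) = _
        erw [hmapσ, toK_CnHom, ih, hobjPow, hobjPow, hxe ((σp ^ k) i) ((σp ^ k) j),
          pow_succ', Equiv.Perm.mul_apply, Equiv.Perm.mul_apply]
        rfl
  have hσpn : ∀ i : Fin n, (σp ^ n) i = i := by
    intro i; rw [hpow, Equiv.Perm.one_apply]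
  have hobjn : ∀ i : Cn K n, (funcPow σ n).obj i = (𝟭 (Cn K n)).obj i := by
    intro i; erw [hobjPow n i, hσpn]; rfl
  refine CategoryTheory.Functor.ext hobjn fun X Y f => ?_
  apply hom_ext
  have hrhs : toK (eqToHom (hobjn X) ≫ (𝟭 (Cn K n)).map f ≫ eqToHom (hobjn Y).symm)
      = toK f := sandwich_toK _ _ _
  rw [hrhs]
  -- decompose f as a multiple of the basic morphism
  have hf : f = (toK f * (x Y X)⁻¹) • CnHom X Y (x Y X) := by
    apply hom_ext
    rw [smul_toK, toK_CnHom, toK_CnHom, mul_assoc, inv_mul_cancel₀ (hxne Y X), mul_one]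
  calc toK ((funcPow σ n).map f)
      = toK ((funcPow σ n).map ((toK f * (x Y X)⁻¹) • CnHom X Y (x Y X))) := by rw [← hf]
    _ = toK ((toK f * (x Y X)⁻¹) • (funcPow σ n).map (CnHom X Y (x Y X))) := by
        rw [hlinPow]
    _ = (toK f * (x Y X)⁻¹) * toK ((funcPow σ n).map (CnHom X Y (x Y X))) := by
        rw [smul_toK, toK_CnHom]
    _ = (toK f * (x Y X)⁻¹) * x ((σp ^ n) Y) ((σp ^ n) X) := by rw [hmapPow]
    _ = (toK f * (x Y X)⁻¹) * x Y X := by erw [hσpn, hσpn]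
    _ = toK f := by
        rw [mul_assoc, inv_mul_cancel₀ (hxne Y X), mul_one]
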